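/- Fix an integer W ≥ 3, real numbers a > 0 and b > 0 with a ≤ b/(W−1), and an index i ∈ {1,…,W}. For a probability vector λ on {1,…,W} and each j ∈ {1,…,2W} with j ≠ i, define c_j(λ) = λ(i)·a + λ(j)·b if j ≤ W and j ≠ i; c_j(λ) = λ(i)·a + (1−λ(i))·b if j = i+W; and c_j(λ) = (1 − λ(i) − λ(j−W))·b if j > W and j ≠ i+W. Then the supremum over all probability vectors λ on {1,…,W} of min_{j ∈ {1,…,2W}, j ≠ i} c_j(λ) equals b/(W−1), and it is attained by the probability vector λ with λ(i) = 0 and λ(j) = 1/(W−1) for every j ≠ i, 1 ≤ j ≤ W. -/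

import Mathlib

/-!
Some location `j ≠ i` carries weight at most `(1 - λ(i))/(W-1)`, so
`c_j(λ) = λ(i) a + λ(j) b ≤ λ(i) b/(W-1) + (1 - λ(i)) b/(W-1) = b/(W-1)` because `a ≤ b/(W-1)`.
Conversely, the vector uniform off `i` gives `c_j = b/(W-1)` for `j < W`, `c_{i+W} = b`, and
`c_j = (1 - 1/(W-1)) b ≥ b/(W-1)` for the other `j ≥ W`, the last step using `W ≥ 3`.
-/

/-- The quantity `c_j(λ)` from Case 2 of the visual search problem (zero-based indexing:
locations are `0,…,W−1`, hypotheses are `0,…,2W−1`). -/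
noncomputable def cFun (W : ℕ) (a b : ℝ) (i : ℕ) (l : ℕ → ℝ) (j : ℕ) : ℝ :=
  if j < W then l i * a + l j * b
  else if j = i + W then l i * a + (1 - l i) * b
  else (1 - l i - l (j - W)) * b

/-- `min_{j ∈ {0,…,2W−1}, j ≠ i} c_j(λ)`. -/
noncomputable def minC (W : ℕ) (hW : 3 ≤ W) (a b : ℝ) (i : ℕ) (hi : i < W)
    (l : ℕ → ℝ) : ℝ :=
  ((Finset.range (2 * W)).erase i).inf'
    (by
      apply Finset.card_pos.mp
      rw [Finset.card_erase_of_mem (Finset.mem_range.mpr (by omega)), Finset.card_range]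
      omega)
    (cFun W a b i l)

open Finset

noncomputable def uniformOff (W i : ℕ) : ℕ → ℝ :=
  fun j => if j = i then 0 else 1 / ((W : ℝ) - 1)

section

variable {W : ℕ} {a b : ℝ} {i : ℕ} {l : ℕ → ℝ}

lemma cFun_of_lt {j : ℕ} (hj : j < W) : cFun W a b i l j = l i * a + l j * b := if_pos hj

lemma minC_le_cFun (hW : 3 ≤ W) (hi : i < W) {j : ℕ} (hji : j ≠ i) (hj : j < 2 * W) :
    minC W hW a b i hi l ≤ cFun W a b i l j :=
  inf'_le _ (mem_erase.mpr ⟨hji, mem_range.mpr hj⟩)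

lemma exists_mul_le_one_sub (hW : 2 ≤ W) (hi : i < W) (hsum : ∑ j ∈ range W, l j = 1) :
    ∃ j, j < W ∧ j ≠ i ∧ ((W : ℝ) - 1) * l j ≤ 1 - l i := by
  have hcard : #((range W).erase i) = W - 1 := by
    rw [card_erase_of_mem (mem_range.mpr hi), card_range]
  have hne : ((range W).erase i).Nonempty := card_pos.mp (by omega)
  obtain ⟨j, hj, hmin⟩ := exists_min_image _ l hne
  obtain ⟨hji, hjW⟩ := mem_erase.mp hj
  refine ⟨j, mem_range.mp hjW, hji, ?_⟩
  have hrest : ∑ k ∈ (range W).erase i, l k = 1 - l i := by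
    rw [← hsum, ← add_sum_erase _ _ (mem_range.mpr hi), add_sub_cancel_left]
  have havg := card_nsmul_le_sum _ _ _ hmin
  rw [hcard, nsmul_eq_mul, hrest, Nat.cast_sub (by omega : 1 ≤ W), Nat.cast_one] at havg
  exact havg

lemma minC_le_of_sum_eq_one (hW : 3 ≤ W) (hb : 0 ≤ b) (hab : a ≤ b / ((W : ℝ) - 1))
    (hi : i < W) (hl : ∀ j, j < W → 0 ≤ l j) (hsum : ∑ j ∈ range W, l j = 1) :
    minC W hW a b i hi l ≤ b / ((W : ℝ) - 1) := by
  have hW1 : (0 : ℝ) < (W : ℝ) - 1 := by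
    have : (3 : ℝ) ≤ W := by exact_mod_cast hW
    linarith
  obtain ⟨j, hjW, hji, hj⟩ := exists_mul_le_one_sub (by omega) hi hsum
  have hlj : l j ≤ (1 - l i) / ((W : ℝ) - 1) := by rw [le_div_iff₀ hW1]; linarith
  calc minC W hW a b i hi l ≤ l i * a + l j * b := by
        rw [← cFun_of_lt hjW]; exact minC_le_cFun hW hi hji (by omega)
    _ ≤ l i * (b / ((W : ℝ) - 1)) + (1 - l i) / ((W : ℝ) - 1) * b := by
        gcongr
        exact hl i hi
    _ = b / ((W : ℝ) - 1) := by field_simp; ring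

lemma uniformOff_nonneg (hW : 2 ≤ W) (j : ℕ) : 0 ≤ uniformOff W i j := by
  have : (2 : ℝ) ≤ W := by exact_mod_cast hW
  unfold uniformOff
  split_ifs
  · exact le_rfl
  · exact div_nonneg zero_le_one (by linarith)

lemma uniformOff_self : uniformOff W i i = 0 := if_pos rfl

lemma uniformOff_of_ne {j : ℕ} (hji : j ≠ i) : uniformOff W i j = 1 / ((W : ℝ) - 1) := if_neg hji

lemma sum_uniformOff (hW : 2 ≤ W) (hi : i < W) : ∑ j ∈ range W, uniformOff W i j = 1 := by
  have hW1 : (W : ℝ) - 1 ≠ 0 := by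
    have : (2 : ℝ) ≤ W := by exact_mod_cast hW
    linarith
  rw [← add_sum_erase _ _ (mem_range.mpr hi),
    sum_congr rfl fun j hj => uniformOff_of_ne (mem_erase.mp hj).1, sum_const,
    card_erase_of_mem (mem_range.mpr hi), card_range, nsmul_eq_mul,
    Nat.cast_sub (by omega : 1 ≤ W), Nat.cast_one, uniformOff_self]
  field_simp
  ring

lemma div_le_cFun_uniformOff (hW : 3 ≤ W) (hb : 0 ≤ b) {j : ℕ} (hji : j ≠ i) :
    b / ((W : ℝ) - 1) ≤ cFun W a b i (uniformOff W i) j := by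
  have hW1 : (2 : ℝ) ≤ (W : ℝ) - 1 := by
    have : (3 : ℝ) ≤ W := by exact_mod_cast hW
    linarith
  have hinv : 1 / ((W : ℝ) - 1) ≤ 1 / 2 := one_div_le_one_div_of_le two_pos hW1
  unfold cFun
  split_ifs with hjW hjiW
  · rw [uniformOff_self, uniformOff_of_ne hji]; exact le_of_eq (by ring)
  · rw [uniformOff_self, div_le_iff₀ (by linarith)]; nlinarith
  · rw [uniformOff_self, uniformOff_of_ne (by omega : j - W ≠ i), div_eq_mul_one_div b]
    nlinarith

end

theorem stmt_2_general (W : ℕ) (hW : 3 ≤ W) (a b : ℝ) (hb : 0 < b)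
    (hab : a ≤ b / ((W : ℝ) - 1)) (i : ℕ) (hi : i < W) :
    (∀ l : ℕ → ℝ, (∀ j, j < W → 0 ≤ l j) → (∑ j ∈ Finset.range W, l j) = 1 →
      minC W hW a b i hi l ≤ b / ((W : ℝ) - 1)) ∧
    (∀ j, j < W → (0 : ℝ) ≤ if j = i then 0 else 1 / ((W : ℝ) - 1)) ∧
    (∑ j ∈ Finset.range W, (if j = i then (0 : ℝ) else 1 / ((W : ℝ) - 1))) = 1 ∧
    minC W hW a b i hi (fun j => if j = i then 0 else 1 / ((W : ℝ) - 1)) =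
      b / ((W : ℝ) - 1) := by
  have hnonneg : ∀ j, j < W → 0 ≤ uniformOff W i j := fun j _ => uniformOff_nonneg (by omega) j
  have hsum : ∑ j ∈ range W, uniformOff W i j = 1 := sum_uniformOff (by omega) hi
  refine ⟨fun _ => minC_le_of_sum_eq_one hW hb.le hab hi, hnonneg, hsum, le_antisymm ?_ ?_⟩
  · exact minC_le_of_sum_eq_one hW hb.le hab hi hnonneg hsum
  · exact le_inf' _ _ fun j hj => div_le_cFun_uniformOff hW hb.le (mem_erase.mp hj).1

theorem stmt_2 (W : ℕ) (hW : 3 ≤ W) (a b : ℝ) (ha : 0 < a) (hb : 0 < b)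
    (hab : a ≤ b / ((W : ℝ) - 1)) (i : ℕ) (hi : i < W) :
    (∀ l : ℕ → ℝ, (∀ j, j < W → 0 ≤ l j) → (∑ j ∈ Finset.range W, l j) = 1 →
      minC W hW a b i hi l ≤ b / ((W : ℝ) - 1)) ∧
    (∀ j, j < W → (0 : ℝ) ≤ if j = i then 0 else 1 / ((W : ℝ) - 1)) ∧
    (∑ j ∈ Finset.range W, (if j = i then (0 : ℝ) else 1 / ((W : ℝ) - 1))) = 1 ∧
    minC W hW a b i hi (fun j => if j = i then 0 else 1 / ((W : ℝ) - 1)) =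
      b / ((W : ℝ) - 1) :=
  stmt_2_general W hW a b hb hab i hi
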